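/- arXiv:1801.09443 — 3 statements merged into one kernel-verified Lean document; each statement's English description precedes it below -/
import Mathlib

section
/- If two finite sets C and C' of atoms both support x, then C ∩ C' supports x. -/
/-- Any injection defined on a finite subset of an infinite type extends to a permutation. -/
lemma exists_perm_extend {𝔸 : Type*} [Infinite 𝔸] (s : Finset 𝔸) (f : 𝔸 → 𝔸)
    (hf : Set.InjOn f (s : Set 𝔸)) : ∃ π : Equiv.Perm 𝔸, ∀ a ∈ s, π a = f a := by
  let hemb : ((s : Set 𝔸) : Type _) ↪ 𝔸 :=
    ⟨fun a => f a, fun a b hab => Subtype.ext (hf a.2 b.2 hab)⟩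
  have hcard : (Cardinal.mk (s : Set 𝔸)) < Cardinal.mk 𝔸 := by
    refine lt_of_lt_of_le ?_ (Cardinal.aleph0_le_mk 𝔸)
    exact Cardinal.lt_aleph0_of_finite _
  obtain ⟨g, hg⟩ := Cardinal.extend_function_of_lt hemb hcard ⟨Equiv.refl 𝔸⟩
  exact ⟨g, fun a ha => by simpa [hemb] using hg ⟨a, ha⟩⟩

theorem inter_supports {𝔸 : Type*} [Infinite 𝔸] [DecidableEq 𝔸]
    {X : Type*} [MulAction (Equiv.Perm 𝔸) X] (x : X) (C C' : Finset 𝔸)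
    (hC : ∀ π : Equiv.Perm 𝔸, (∀ a ∈ (C : Set 𝔸), π a = a) → π • x = x)
    (hC' : ∀ π : Equiv.Perm 𝔸, (∀ a ∈ (C' : Set 𝔸), π a = a) → π • x = x) :
    ∀ π : Equiv.Perm 𝔸, (∀ a ∈ ((C ∩ C' : Finset 𝔸) : Set 𝔸), π a = a) → π • x = x := by
  intro π hπ
  classical
  -- the "big" finset of relevant atoms
  set S : Finset 𝔸 := C ∪ C' ∪ C'.image π with hS
  set T : Finset 𝔸 := S \ C' with hT
  -- fresh atoms F, disjoint from S, in bijection with T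
  obtain ⟨F, hFsub, hFcard⟩ := (Set.Finite.infinite_compl (S.finite_toSet)).exists_subset_card_eq T.card
  have hFS : ∀ a ∈ F, a ∉ S := by
    intro a haF haS
    exact (hFsub haF) haS
  have e : ((T : Finset 𝔸) : Type _) ≃ ((F : Finset 𝔸) : Type _) := by
    apply Fintype.equivOfCardEq
    simp [hFcard]
  -- σ : identity on C', sends T to fresh atoms
  set f : 𝔸 → 𝔸 := fun a => if h : a ∈ T then (e ⟨a, h⟩ : 𝔸) else a with hf
  have hfT : ∀ a (h : a ∈ T), f a = (e ⟨a, h⟩ : 𝔸) := by intro a h; simp [hf, h]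
  have hfnT : ∀ a, a ∉ T → f a = a := by intro a h; simp [hf, h]
  have hfF : ∀ a ∈ T, f a ∈ F := by
    intro a h; rw [hfT a h]; exact (e ⟨a, h⟩).2
  have hinj : Set.InjOn f (S : Set 𝔸) := by
    intro a ha b hb hab
    by_cases haT : a ∈ T <;> by_cases hbT : b ∈ T
    · rw [hfT a haT, hfT b hbT] at hab
      have := e.injective (Subtype.ext hab)
      exact congrArg Subtype.val this
    · exfalso
      rw [hfT a haT, hfnT b hbT] at hab
      have : b ∈ F := hab ▸ (e ⟨a, haT⟩).2
      exact hFS b this (by exact_mod_cast hb)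
    · exfalso
      rw [hfnT a haT, hfT b hbT] at hab
      have : a ∈ F := hab ▸ (e ⟨b, hbT⟩).2
      exact hFS a this (by exact_mod_cast ha)
    · rwa [hfnT a haT, hfnT b hbT] at hab
  obtain ⟨σ, hσ⟩ := exists_perm_extend S f hinj
  have hσC' : ∀ b ∈ C', σ b = b := by
    intro b hb
    have hbS : b ∈ S := by simp [hS, hb]
    rw [hσ b hbS, hfnT b (by simp [hT, hb])]
  -- ρ = σ ∘ π
  set ρ : Equiv.Perm 𝔸 := σ * π with hρ
  have hπfix : ∀ a, a ∈ C → a ∈ C' → π a = a := by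
    intro a h1 h2
    exact hπ a (by simp [h1, h2])
  have hρfix : ∀ a, a ∈ C → a ∈ C' → ρ a = a := by
    intro a h1 h2
    simp only [hρ, Equiv.Perm.mul_apply, hπfix a h1 h2]
    exact hσC' a h2
  have hρout : ∀ b, b ∈ C' → b ∉ C → ρ b ∉ C := by
    intro b hb hbC
    have hπbS : π b ∈ S := by
      simp only [hS, Finset.mem_union]
      right; exact Finset.mem_image_of_mem π hb
    by_cases h : π b ∈ C'
    · -- then ρ b = π b and π b ∉ C
      have : ρ b = π b := by
        simp only [hρ, Equiv.Perm.mul_apply]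
        exact hσC' (π b) h
      rw [this]
      intro hπbC
      have := hπfix (π b) hπbC h
      have : π b = b := π.injective this
      exact hbC (this ▸ hπbC)
    · -- π b ∈ T, so ρ b ∈ F, disjoint from S ⊇ C
      have hπbT : π b ∈ T := by simp [hT, hπbS, h]
      have : ρ b ∈ F := by
        simp only [hρ, Equiv.Perm.mul_apply, hσ (π b) hπbS]
        exact hfF (π b) hπbT
      intro hc
      exact hFS _ this (by simp [hS, hc])
  -- π' : identity on C, agrees with ρ on C'
  set g : 𝔸 → 𝔸 := fun a => if a ∈ C then a else ρ a with hg
  have hginj : Set.InjOn g ((C ∪ C' : Finset 𝔸) : Set 𝔸) := by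
    intro a ha b hb hab
    simp only [Finset.coe_union, Set.mem_union, Finset.mem_coe] at ha hb
    by_cases haC : a ∈ C <;> by_cases hbC : b ∈ C
    · simpa [hg, haC, hbC] using hab
    · exfalso
      have hbC' : b ∈ C' := hb.resolve_left hbC
      simp only [hg, if_pos haC, if_neg hbC] at hab
      exact hρout b hbC' hbC (hab ▸ haC)
    · exfalso
      have haC' : a ∈ C' := ha.resolve_left haC
      simp only [hg, if_neg haC, if_pos hbC] at hab
      exact hρout a haC' haC (hab ▸ hbC)
    · simp only [hg, if_neg haC, if_neg hbC] at hab
      exact ρ.injective hab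
  obtain ⟨π', hπ'⟩ := exists_perm_extend (C ∪ C') g hginj
  have hπ'C : ∀ a ∈ C, π' a = a := by
    intro a ha
    rw [hπ' a (Finset.mem_union_left _ ha)]
    simp [hg, ha]
  have hπ'x : π' • x = x := hC π' (fun a ha => hπ'C a ha)
  -- π'⁻¹ * ρ fixes C' pointwise
  have hcomp : ∀ b ∈ C', (π'⁻¹ * ρ) b = b := by
    intro b hb
    simp only [Equiv.Perm.mul_apply]
    by_cases hbC : b ∈ C
    · rw [hρfix b hbC hb, Equiv.Perm.inv_eq_iff_eq]
      exact (hπ'C b hbC).symm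
    · have : π' b = ρ b := by
        rw [hπ' b (Finset.mem_union_right _ hb)]; simp [hg, hbC]
      rw [← this]
      exact π'.symm_apply_apply b
  have hcompx : (π'⁻¹ * ρ) • x = x := hC' _ (fun b hb => hcomp b (by exact_mod_cast hb))
  have hρx : ρ • x = x := by
    have : ρ • x = π' • ((π'⁻¹ * ρ) • x) := by
      rw [← mul_smul]
      group
    rw [this, hcompx, hπ'x]
  have hσinvC' : ∀ b ∈ (C' : Set 𝔸), σ⁻¹ b = b := by
    intro b hb
    have := hσC' b (by exact_mod_cast hb)
    conv_lhs => rw [← this]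
    exact σ.symm_apply_apply b
  have hσinvx : σ⁻¹ • x = x := hC' σ⁻¹ hσinvC'
  have : π • x = σ⁻¹ • (ρ • x) := by
    rw [← mul_smul, hρ]
    group
  rw [this, hρx, hσinvx]
end

section
/- If x has finite support, then there is a unique least finite set of atoms supporting x, namely the intersection of all finite supporting sets. -/
/-- K supports x. -/
def NSupports {𝔸 X : Type*} [MulAction (Equiv.Perm 𝔸) X] (K : Set 𝔸) (x : X) : Prop :=
  ∀ σ : Equiv.Perm 𝔸, (∀ a ∈ K, σ a = a) → σ • x = x

/-- The support of x: intersection of all finite supporting sets. -/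
def nsupp {𝔸 X : Type*} [MulAction (Equiv.Perm 𝔸) X] (x : X) : Set 𝔸 :=
  ⋂₀ {C : Set 𝔸 | C.Finite ∧ NSupports C x}

/-!
For finite `A`, `B` in an infinite type, the pointwise stabiliser of `A ∩ B` is generated by those
of `A` and `B`. Given `σ` fixing `A ∩ B`, first let some `π` fixing `A` move `B \ A` to fresh atoms,
outside `σ⁻¹ A`. Then `σ π` sends no atom of `B \ A` into `A`, so the map that is `(σ π)⁻¹` on
`A \ B` and the identity on `B` is injective and extends to a permutation `τ` fixing `B`, and
`σ π τ` fixes `A`. As the stabiliser of `x` contains both stabilisers, finite supports of `x` are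
closed under intersection; hence a minimal finite support is the least one, and it is the
intersection of all of them.
-/

open Set Equiv

section Perm

variable {α : Type*}

theorem Equiv.Perm.mem_fixingSubgroup_iff {s : Set α} {σ : Perm α} :
    σ ∈ fixingSubgroup (Perm α) s ↔ ∀ a ∈ s, σ a = a :=
  _root_.mem_fixingSubgroup_iff _

theorem exists_perm_eqOn_of_injOn {S : Set α} (hS : S.Finite) {f : α → α} (hf : InjOn f S) :
    ∃ σ : Perm α, EqOn σ f S := by
  have : Finite S := hS
  let e : S ↪ α := ⟨S.domRestrict f, hf.injective⟩
  obtain ⟨σ, hσ⟩ : ∃ σ : Perm α, ∀ a : S, σ a = e a := by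
    rcases finite_or_infinite α with hα | hα
    · exact Cardinal.extend_function_finite e ⟨Equiv.refl α⟩
    · exact Cardinal.extend_function_of_lt e
        (hS.lt_aleph0.trans_le (Cardinal.aleph0_le_mk α)) ⟨Equiv.refl α⟩
  exact ⟨σ, fun a ha => hσ ⟨a, ha⟩⟩

theorem exists_mem_fixingSubgroup_forall_apply_notMem [Infinite α] {A D F : Set α}
    (hA : A.Finite) (hD : D.Finite) (hF : F.Finite) (hAD : Disjoint A D) :
    ∃ π ∈ fixingSubgroup (Perm α) A, ∀ d ∈ D, π d ∉ F := by
  classical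
  have : Finite D := hD
  let e : D ↪ ((A ∪ F)ᶜ : Set α) :=
    (Finite.equivFin D).toEmbedding.trans
      (Fin.valEmbedding.trans ((hA.union hF).infinite_compl.natEmbedding _))
  let f : α → α := fun a => if h : a ∈ D then e ⟨a, h⟩ else a
  have hfD : ∀ d (hd : d ∈ D), f d = e ⟨d, hd⟩ := fun d hd => dif_pos hd
  have hfA : ∀ a ∈ A, f a = a := fun a ha => dif_neg (hAD.notMem_of_mem_left ha)
  have hf : InjOn f (A ∪ D) := by
    refine (injOn_union hAD).2 ⟨?_, ?_, ?_⟩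
    · exact fun a ha b hb hab => by rwa [hfA a ha, hfA b hb] at hab
    · intro a ha b hb hab
      rw [hfD a ha, hfD b hb] at hab
      exact congrArg Subtype.val (e.injective (Subtype.ext hab))
    · intro a ha d hd had
      exact (e ⟨d, hd⟩).2 (Or.inl (by rw [← hfD d hd, ← had, hfA a ha]; exact ha))
  obtain ⟨π, hπ⟩ := exists_perm_eqOn_of_injOn (hA.union hD) hf
  refine ⟨π, Perm.mem_fixingSubgroup_iff.2 fun a ha => (hπ (Or.inl ha)).trans (hfA a ha), ?_⟩
  intro d hd hdF
  rw [hπ (Or.inr hd), hfD d hd] at hdF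
  exact (e ⟨d, hd⟩).2 (Or.inr hdF)

theorem mem_fixingSubgroup_sup_of_forall_apply_notMem {A B : Set α} (hA : A.Finite)
    (hB : B.Finite) {σ : Perm α} (hσ : σ ∈ fixingSubgroup (Perm α) (A ∩ B))
    (hBA : ∀ b ∈ B \ A, σ b ∉ A) :
    σ ∈ fixingSubgroup (Perm α) A ⊔ fixingSubgroup (Perm α) B := by
  classical
  have hσfix := Perm.mem_fixingSubgroup_iff.1 hσ
  have hmiss : ∀ a ∈ A \ B, σ.symm a ∉ B := by
    intro a ha hb
    by_cases hbA : σ.symm a ∈ A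
    · have hfix : σ (σ.symm a) = σ.symm a := hσfix _ ⟨hbA, hb⟩
      rw [Equiv.apply_symm_apply] at hfix
      exact ha.2 (hfix ▸ hb)
    · exact hBA _ ⟨hb, hbA⟩ (by rw [Equiv.apply_symm_apply]; exact ha.1)
  let f : α → α := fun a => if a ∈ A \ B then σ.symm a else a
  have hfAB : ∀ a ∈ A \ B, f a = σ.symm a := fun a ha => if_pos ha
  have hfB : ∀ b ∈ B, f b = b := fun b hb => if_neg fun ha => ha.2 hb
  have hf : InjOn f (A \ B ∪ B) := by
    refine (injOn_union disjoint_sdiff_left).2 ⟨?_, ?_, ?_⟩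
    · exact fun a ha b hb hab => σ.symm.injective (by rwa [hfAB a ha, hfAB b hb] at hab)
    · exact fun a ha b hb hab => by rwa [hfB a ha, hfB b hb] at hab
    · intro a ha b hb hab
      exact hmiss a ha (by rw [← hfAB a ha, hab, hfB b hb]; exact hb)
  obtain ⟨τ, hτ⟩ := exists_perm_eqOn_of_injOn (hA.sdiff.union hB) hf
  have hτB : τ ∈ fixingSubgroup (Perm α) B :=
    Perm.mem_fixingSubgroup_iff.2 fun b hb => (hτ (Or.inr hb)).trans (hfB b hb)
  have hστA : σ * τ ∈ fixingSubgroup (Perm α) A := by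
    refine Perm.mem_fixingSubgroup_iff.2 fun a ha => ?_
    by_cases hb : a ∈ B
    · rw [Perm.mul_apply, Perm.mem_fixingSubgroup_iff.1 hτB a hb, hσfix a ⟨ha, hb⟩]
    · rw [Perm.mul_apply, hτ (Or.inl ⟨ha, hb⟩), hfAB a ⟨ha, hb⟩, Equiv.apply_symm_apply]
  simpa using Subgroup.mul_mem _ (Subgroup.mem_sup_left hστA)
    (Subgroup.mem_sup_right (inv_mem hτB))

theorem fixingSubgroup_inter_eq_sup [Infinite α] {A B : Set α} (hA : A.Finite) (hB : B.Finite) :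
    fixingSubgroup (Perm α) (A ∩ B) = fixingSubgroup (Perm α) A ⊔ fixingSubgroup (Perm α) B := by
  refine le_antisymm (fun σ hσ => ?_)
    (sup_le (fixingSubgroup_antitone _ _ inter_subset_left)
      (fixingSubgroup_antitone _ _ inter_subset_right))
  obtain ⟨π, hπA, hπ⟩ := exists_mem_fixingSubgroup_forall_apply_notMem hA hB.sdiff
    (hA.preimage σ.injective.injOn) disjoint_sdiff_right
  have hσπ : σ * π ∈ fixingSubgroup (Perm α) A ⊔ fixingSubgroup (Perm α) B :=
    mem_fixingSubgroup_sup_of_forall_apply_notMem hA hB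
      (mul_mem hσ (fixingSubgroup_antitone _ _ inter_subset_left hπA)) hπ
  simpa using mul_mem hσπ (Subgroup.mem_sup_left (inv_mem hπA))

end Perm

section Support

variable {𝔸 X : Type*} [MulAction (Perm 𝔸) X] {x : X}

theorem nSupports_iff_fixingSubgroup_le_stabilizer {K : Set 𝔸} :
    NSupports K x ↔ fixingSubgroup (Perm 𝔸) K ≤ MulAction.stabilizer (Perm 𝔸) x :=
  ⟨fun h σ hσ => h σ (Perm.mem_fixingSubgroup_iff.1 hσ),
    fun h _ hσ => h (Perm.mem_fixingSubgroup_iff.2 hσ)⟩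

theorem nsupp_subset {C : Set 𝔸} (hC : C.Finite) (hCx : NSupports C x) : nsupp x ⊆ C :=
  sInter_subset_of_mem ⟨hC, hCx⟩

theorem NSupports.inter [Infinite 𝔸] {A B : Set 𝔸} (hA : A.Finite) (hB : B.Finite)
    (hAx : NSupports A x) (hBx : NSupports B x) : NSupports (A ∩ B) x := by
  rw [nSupports_iff_fixingSubgroup_le_stabilizer, fixingSubgroup_inter_eq_sup hA hB]
  exact sup_le (nSupports_iff_fixingSubgroup_le_stabilizer.1 hAx)
    (nSupports_iff_fixingSubgroup_le_stabilizer.1 hBx)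

theorem exists_least_finite_nSupports [Infinite 𝔸] (h : ∃ C : Set 𝔸, C.Finite ∧ NSupports C x) :
    ∃ S : Set 𝔸, S.Finite ∧ NSupports S x ∧
      ∀ C : Set 𝔸, C.Finite → NSupports C x → S ⊆ C := by
  obtain ⟨C₀, hC₀, hC₀x⟩ := h
  obtain ⟨S, ⟨hSC₀, hSx⟩, hS⟩ :=
    (hC₀.finite_subsets.inter_of_left {C | NSupports C x}).exists_minimal ⟨C₀, Subset.rfl, hC₀x⟩
  have hSfin : S.Finite := hC₀.subset hSC₀
  refine ⟨S, hSfin, hSx, fun C hC hCx => ?_⟩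
  have hCS : S ⊆ C ∩ S :=
    hS ⟨inter_subset_right.trans hSC₀, hCx.inter hC hSfin hSx⟩ inter_subset_right
  exact hCS.trans inter_subset_left

end Support

theorem least_finite_support {𝔸 : Type*} [Infinite 𝔸]
    {X : Type*} [MulAction (Equiv.Perm 𝔸) X] (x : X)
    (hfs : ∃ C : Set 𝔸, C.Finite ∧ NSupports C x) :
    (nsupp (𝔸 := 𝔸) x).Finite ∧ NSupports (nsupp (𝔸 := 𝔸) x) x ∧
      ∀ C : Set 𝔸, C.Finite → NSupports C x → nsupp (𝔸 := 𝔸) x ⊆ C := by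
  obtain ⟨S, hS, hSx, hleast⟩ := exists_least_finite_nSupports hfs
  have hnsupp : nsupp x = S :=
    (nsupp_subset hS hSx).antisymm (subset_sInter fun C hC => hleast C hC.1 hC.2)
  exact ⟨hnsupp ▸ hS, hnsupp ▸ hSx, fun _ => nsupp_subset⟩
end

section
/- No well-ordering of the atoms (viewed as a set of ordered pairs) has finite support, if the atoms are infinite. -/
theorem no_finite_support_of_order {𝔸 : Type*} [Infinite 𝔸] [LinearOrder 𝔸]
    (K : Set 𝔸) (hK : K.Finite) :
    ¬ (∀ π : Equiv.Perm 𝔸, (∀ a ∈ K, π a = a) →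
        (fun p : 𝔸 × 𝔸 => (π p.1, π p.2)) '' {p : 𝔸 × 𝔸 | p.1 ≤ p.2}
          = {p : 𝔸 × 𝔸 | p.1 ≤ p.2}) := by
  intro h
  have hc : (Kᶜ : Set 𝔸).Infinite := hK.infinite_compl
  obtain ⟨a, ha⟩ := hc.nonempty
  obtain ⟨b, hb, hab⟩ := (hc.diff (Set.finite_singleton a)).nonempty
  have hne : a ≠ b := fun e => hab (by simp [e])
  have key : ∀ x y : 𝔸, x ∈ Kᶜ → y ∈ Kᶜ → x < y → False := by
    intro x y hx hy hlt
    have hfix : ∀ z ∈ K, Equiv.swap x y z = z := by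
      intro z hz
      apply Equiv.swap_apply_of_ne_of_ne
      · rintro rfl; exact hx hz
      · rintro rfl; exact hy hz
    have heq := h (Equiv.swap x y) hfix
    have hmem : ((Equiv.swap x y) x, (Equiv.swap x y) y) ∈
        {p : 𝔸 × 𝔸 | p.1 ≤ p.2} := by
      rw [← heq]
      exact ⟨(x, y), le_of_lt hlt, rfl⟩
    simp only [Equiv.swap_apply_left, Equiv.swap_apply_right,
      Set.mem_setOf_eq] at hmem
    exact absurd hmem (not_le.2 hlt)
  rcases hne.lt_or_gt with hlt | hlt
  · exact key a b ha hb hlt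
  · exact key b a hb ha hlt
end
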